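/- arXiv:2212.12473 — 6 statements merged into one kernel-verified Lean document; each statement's English description precedes it below -/
import Mathlib

section
/- Let k ≥ 3 be an integer. Let F ⊆ ℕ with 0 ∉ F, let f'(n) = |F ∩ {0,1,…,n}| be the counting function of F, and suppose there is a real number α with α < (k-2)/k such that f'(n) = o(n^α) (i.e., f'(n)/n^α → 0 as n → ∞). Let A = ℕ \ F. Then the sequence (r(k,A,n))_{n≥0} is eventually strictly increasing: there exists N such that r(k,A,n) < r(k,A,n+1) for all n ≥ N. -/
/-!
Write `a` and `φ` for the generating functions of `A = Fᶜ` and of `F`, `R_j n = r j Fᶜ n` and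
`D_j` for the backward difference of `R_j`, i.e. the coefficients of `(1 - X) a ^ j`.
From `(1 - X) a = 1 - (1 - X) φ` we get `D_{j+1} = R_j - φ D_j`. Since
`f(n) = |F ∩ [0, n]| = O(n^α)`, this recursion gives `|D_{j+1} n| = O(n^(max (j - 1) (j α)))`
by induction, while `R_{k-1} n ≥ C(n + k - 2, k - 2) - (k - 1) f(n) (n + 1)^(k - 3)` grows like
`n^(k-2)`. Hence `D_k n ≥ R_{k-1} n - f(n) max_{t ≤ n} |D_{k-1} t|` is positive for large `n`,
because `α + max (k - 3) ((k - 2) α) < k - 2` when `α < (k - 2) / k`.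
-/

open Finset Filter Asymptotics

/-- `r k A n` is the number of `k`-tuples `(c₁, …, c_k)` of elements of `A`
with `c₁ + ⋯ + c_k = n`. -/
noncomputable def r (k : ℕ) (A : Set ℕ) (n : ℕ) : ℕ :=
  Set.ncard {c : Fin k → ℕ | (∀ i, c i ∈ A) ∧ ∑ i, c i = n}

section Counting

variable (A : Set ℕ)

theorem r_eq_card [DecidablePred (· ∈ A)] (k n : ℕ) :
    r k A n = #{c ∈ Nat.antidiagonalTuple k n | ∀ i, c i ∈ A} := by
  rw [r, ← Set.ncard_coe_finset]
  congr 1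
  ext c
  simp [Nat.mem_antidiagonalTuple, and_comm]

theorem r_succ (k n : ℕ) :
    r (k + 1) A n = ∑ p ∈ antidiagonal n, A.indicator 1 p.1 * r k A p.2 := by
  classical
  simp only [r_eq_card, Set.indicator_apply, Pi.one_apply, ite_mul, one_mul, zero_mul]
  rw [← sum_filter, ← card_sigma]
  refine card_nbij' (fun c => ⟨(c 0, n - c 0), Fin.tail c⟩) (fun x => Fin.cons x.1.1 x.2)
    ?_ ?_ ?_ ?_
  · intro c hc
    simp only [coe_filter, Nat.mem_antidiagonalTuple, Set.mem_ofPred_eq, Fin.sum_univ_succ] at hc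
    simp only [coe_sigma, Set.mem_sigma_iff, coe_filter, HasAntidiagonal.mem_antidiagonal,
      Set.mem_ofPred_eq, Nat.mem_antidiagonalTuple, Fin.tail]
    exact ⟨⟨by omega, hc.2 0⟩, by omega, fun i => hc.2 i.succ⟩
  · rintro ⟨⟨a, b⟩, c⟩ hx
    simp only [coe_sigma, Set.mem_sigma_iff, coe_filter, HasAntidiagonal.mem_antidiagonal,
      Set.mem_ofPred_eq, Nat.mem_antidiagonalTuple] at hx
    simp only [coe_filter, Nat.mem_antidiagonalTuple, Set.mem_ofPred_eq, Fin.sum_univ_succ,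
      Fin.cons_zero, Fin.cons_succ, Fin.forall_fin_succ]
    exact ⟨by omega, hx.1.2, hx.2.2⟩
  · intro c _
    exact Fin.cons_self_tail c
  · rintro ⟨⟨a, b⟩, c⟩ hx
    simp only [coe_sigma, Set.mem_sigma_iff, coe_filter, HasAntidiagonal.mem_antidiagonal,
      Set.mem_ofPred_eq] at hx
    simp [← hx.1.1]

theorem r_one (n : ℕ) : r 1 A n = A.indicator 1 n := by
  classical
  rw [r_eq_card, Nat.antidiagonalTuple_one, filter_singleton]
  by_cases h : n ∈ A <;> simp [h]

theorem r_succ_le_pow (k n : ℕ) : r (k + 1) A n ≤ (n + 1) ^ k := by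
  induction k generalizing n with
  | zero => rw [r_one]; exact Set.indicator_le_self' (fun _ _ => zero_le_one) n
  | succ k ih =>
    rw [r_succ, pow_succ']
    refine (sum_le_card_nsmul _ _ ((n + 1) ^ k) fun p hp => ?_).trans_eq (by simp)
    have hp2 : p.2 ≤ n := HasAntidiagonal.antidiagonal.snd_le hp
    calc A.indicator 1 p.1 * r (k + 1) A p.2 ≤ 1 * (p.2 + 1) ^ k :=
          Nat.mul_le_mul (Set.indicator_le_self' (fun _ _ => zero_le_one) _) (ih p.2)
      _ ≤ (n + 1) ^ k := by rw [one_mul]; gcongr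

end Counting

/-- The backward difference with the convention `u (-1) = 0`, so that it commutes with
convolution (`backDiff_sum_antidiagonal_mul`). -/
def backDiff (u : ℕ → ℤ) : ℕ → ℤ
  | 0 => u 0
  | n + 1 => u (n + 1) - u n

theorem backDiff_sub (u v : ℕ → ℤ) (n : ℕ) :
    backDiff (fun m => u m - v m) n = backDiff u n - backDiff v n := by
  cases n <;> simp only [backDiff]; ring

theorem backDiff_sum_range (u : ℕ → ℤ) (n : ℕ) :
    backDiff (fun m => ∑ i ∈ range (m + 1), u i) n = u n := by
  cases n <;> simp [backDiff, sum_range_succ _ (_ + 1)]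

theorem backDiff_sum_antidiagonal_mul (w u : ℕ → ℤ) (n : ℕ) :
    backDiff (fun m => ∑ p ∈ antidiagonal m, w p.1 * u p.2) n =
      ∑ p ∈ antidiagonal n, w p.1 * backDiff u p.2 := by
  cases n with
  | zero => simp [backDiff]
  | succ n => simp [backDiff, Nat.sum_antidiagonal_succ', mul_sub, sum_sub_distrib]; ring

section Complement

variable (F : Set ℕ)

theorem sum_range_indicator_eq_ncard (n : ℕ) :
    ∑ m ∈ range (n + 1), F.indicator (1 : ℕ → ℤ) m = (F ∩ Set.Iic n).ncard := by
  classical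
  have : F ∩ Set.Iic n = ↑{m ∈ range (n + 1) | m ∈ F} := by
    ext m; simp [and_comm]
  rw [this, Set.ncard_coe_finset]
  simp [Set.indicator_apply, sum_boole]

theorem ncard_inter_Iic_mono : Monotone fun n => (F ∩ Set.Iic n).ncard := fun _ b h =>
  Set.ncard_le_ncard (Set.inter_subset_inter_right F (Set.Iic_subset_Iic.2 h))
    ((Set.finite_Iic b).inter_of_right F)

theorem abs_sum_antidiagonal_indicator_mul_le {v : ℕ → ℤ} {B : ℤ} {n : ℕ}
    (hv : ∀ t ≤ n, |v t| ≤ B) :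
    |∑ p ∈ antidiagonal n, F.indicator 1 p.1 * v p.2| ≤ (F ∩ Set.Iic n).ncard * B := by
  have hind : ∀ m, 0 ≤ F.indicator (1 : ℕ → ℤ) m :=
    fun m => Set.indicator_nonneg (by simp) m
  calc |∑ p ∈ antidiagonal n, F.indicator 1 p.1 * v p.2|
      ≤ ∑ p ∈ antidiagonal n, F.indicator 1 p.1 * B := by
        refine (abs_sum_le_sum_abs _ _).trans (sum_le_sum fun p hp => ?_)
        rw [abs_mul, abs_of_nonneg (hind _)]
        exact mul_le_mul_of_nonneg_left (hv _ (HasAntidiagonal.antidiagonal.snd_le hp)) (hind _)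
    _ = (F ∩ Set.Iic n).ncard * B := by
        rw [← sum_mul, Nat.sum_antidiagonal_eq_sum_range_succ_mk, sum_range_indicator_eq_ncard]

theorem natCast_indicator_compl (m : ℕ) :
    ((Fᶜ.indicator 1 m : ℕ) : ℤ) = 1 - F.indicator 1 m := by
  by_cases h : m ∈ F <;> simp [h]

theorem r_compl_succ (k n : ℕ) :
    (r (k + 1) Fᶜ n : ℤ) = ∑ m ∈ range (n + 1), (r k Fᶜ m : ℤ) -
      ∑ p ∈ antidiagonal n, F.indicator 1 p.1 * (r k Fᶜ p.2 : ℤ) := by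
  rw [r_succ, Nat.cast_sum]
  simp only [Nat.cast_mul, natCast_indicator_compl, sub_mul, one_mul, sum_sub_distrib]
  rw [← Nat.sum_antidiagonal_swap]
  exact congrArg (· - _)
    (Nat.sum_antidiagonal_eq_sum_range_succ_mk (fun p => (r k Fᶜ p.1 : ℤ)) n)

theorem backDiff_r_compl_succ (k n : ℕ) :
    backDiff (fun m => (r (k + 1) Fᶜ m : ℤ)) n =
      r k Fᶜ n - ∑ p ∈ antidiagonal n,
        F.indicator 1 p.1 * backDiff (fun m => (r k Fᶜ m : ℤ)) p.2 := by
  simp_rw [r_compl_succ]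
  rw [backDiff_sub, backDiff_sum_range,
    backDiff_sum_antidiagonal_mul (F.indicator 1) (fun m => (r k Fᶜ m : ℤ))]

/-- The bound for `|backDiff (r (s + 1) Fᶜ) n|` that the recursion `backDiff_r_compl_succ`
yields. -/
noncomputable def diffBound (F : Set ℕ) : ℕ → ℕ → ℕ
  | 0, _ => 1
  | s + 1, n => (n + 1) ^ s + (F ∩ Set.Iic n).ncard * diffBound F s n

theorem diffBound_mono (s : ℕ) : Monotone (diffBound F s) := by
  induction s with
  | zero => exact monotone_const
  | succ s ih =>
    intro a b hab
    exact Nat.add_le_add (by gcongr) (Nat.mul_le_mul (ncard_inter_Iic_mono F hab) (ih hab))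

theorem abs_backDiff_r_compl_le (s n : ℕ) :
    |backDiff (fun m => (r (s + 1) Fᶜ m : ℤ)) n| ≤ diffBound F s n := by
  induction s generalizing n with
  | zero =>
    cases n with
    | zero => by_cases h : 0 ∈ F <;> simp [backDiff, r_one, diffBound, h]
    | succ n =>
      by_cases h : n ∈ F <;> by_cases h' : n + 1 ∈ F <;>
        simp [backDiff, r_one, diffBound, h, h']
  | succ s ih =>
    have hr : |(r (s + 1) Fᶜ n : ℤ)| ≤ (n + 1) ^ s := by
      rw [abs_of_nonneg (by positivity)]; exact_mod_cast r_succ_le_pow Fᶜ s n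
    have hsum := abs_sum_antidiagonal_indicator_mul_le F (n := n) fun t ht =>
      (ih t).trans (Nat.cast_le.2 (diffBound_mono F s ht))
    rw [backDiff_r_compl_succ]
    push_cast [diffBound]
    exact (abs_sub _ _).trans (add_le_add hr hsum)

theorem backDiff_r_compl_ge (s n : ℕ) :
    (r (s + 1) Fᶜ n : ℤ) - (F ∩ Set.Iic n).ncard * diffBound F s n ≤
      backDiff (fun m => (r (s + 2) Fᶜ m : ℤ)) n := by
  have hsum := abs_sum_antidiagonal_indicator_mul_le F (n := n) fun t ht =>
    (abs_backDiff_r_compl_le F s t).trans (Nat.cast_le.2 (diffBound_mono F s ht))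
  rw [backDiff_r_compl_succ]
  linarith [le_abs_self (∑ p ∈ antidiagonal n,
    F.indicator 1 p.1 * backDiff (fun m => (r (s + 1) Fᶜ m : ℤ)) p.2)]

theorem sum_range_r_compl_le (j n : ℕ) :
    ∑ m ∈ range (n + 1), (r (j + 1) Fᶜ m : ℤ) ≤
      r (j + 2) Fᶜ n + (F ∩ Set.Iic n).ncard * (n + 1) ^ j := by
  have hsum := abs_sum_antidiagonal_indicator_mul_le F (v := fun m => (r (j + 1) Fᶜ m : ℤ))
    (B := (n + 1) ^ j) fun t ht => by
      rw [abs_of_nonneg (by positivity)]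
      exact_mod_cast (r_succ_le_pow Fᶜ j t).trans (by gcongr)
  rw [r_compl_succ F (j + 1)]
  linarith [le_abs_self (∑ p ∈ antidiagonal n, F.indicator 1 p.1 * (r (j + 1) Fᶜ p.2 : ℤ))]

theorem choose_le_r_compl (s n : ℕ) :
    ((n + s + 1).choose (s + 1) : ℤ) ≤
      r (s + 2) Fᶜ n + (s + 2) * (F ∩ Set.Iic n).ncard * (n + 1) ^ s := by
  induction s generalizing n with
  | zero =>
    have hsum : ∑ m ∈ range (n + 1), (r 1 Fᶜ m : ℤ) = n + 1 - (F ∩ Set.Iic n).ncard := by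
      simp [r_one, natCast_indicator_compl, sum_range_indicator_eq_ncard]
    have hstep := sum_range_r_compl_le F 0 n
    norm_num
    linarith
  | succ s ih =>
    have herr : ∀ i ∈ range (n + 1), (s + 2) * ((F ∩ Set.Iic i).ncard : ℤ) * (i + 1) ^ s ≤
        (s + 2) * (F ∩ Set.Iic n).ncard * (n + 1) ^ s := by
      intro i hi
      have hi : i ≤ n := Nat.lt_succ_iff.1 (mem_range.1 hi)
      gcongr ?_ * ?_ * ?_
      · exact_mod_cast ncard_inter_Iic_mono F hi
      · gcongr
    have hstep := sum_range_r_compl_le F (s + 1) n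
    calc ((n + (s + 1) + 1).choose (s + 1 + 1) : ℤ)
        = ∑ i ∈ range (n + 1), ((i + s + 1).choose (s + 1) : ℤ) := by
          rw [← Nat.sum_range_add_choose, Nat.cast_sum]; rfl
      _ ≤ ∑ i ∈ range (n + 1), ((r (s + 2) Fᶜ i : ℤ) +
            (s + 2) * (F ∩ Set.Iic i).ncard * (i + 1) ^ s) := sum_le_sum fun i _ => ih i
      _ ≤ ∑ i ∈ range (n + 1), (r (s + 2) Fᶜ i : ℤ) +
            (n + 1) * ((s + 2) * (F ∩ Set.Iic n).ncard * (n + 1) ^ s) := by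
          rw [sum_add_distrib]
          gcongr
          exact (sum_le_sum herr).trans_eq
            (by rw [sum_const, card_range, nsmul_eq_mul]; push_cast; ring)
      _ ≤ r (s + 1 + 2) Fᶜ n + (F ∩ Set.Iic n).ncard * (n + 1) ^ (s + 1) +
            (n + 1) * ((s + 2) * (F ∩ Set.Iic n).ncard * (n + 1) ^ s) := by linarith
      _ = _ := by push_cast; ring

end Complement

theorem isBigO_natCast_rpow_of_le {a b : ℝ} (h : a ≤ b) :
    (fun n : ℕ => (n : ℝ) ^ a) =O[atTop] fun n => (n : ℝ) ^ b := by
  refine Eventually.isBigO ?_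
  filter_upwards [eventually_ge_atTop 1] with n hn
  rw [Real.norm_of_nonneg (by positivity)]
  exact Real.rpow_le_rpow_of_exponent_le (by exact_mod_cast hn) h

theorem isLittleO_natCast_rpow_of_lt {a b : ℝ} (h : a < b) :
    (fun n : ℕ => (n : ℝ) ^ a) =o[atTop] fun n => (n : ℝ) ^ b := by
  refine (isLittleO_iff_tendsto' ?_).2 ?_
  · filter_upwards [eventually_ge_atTop 1] with n hn h0
    exact absurd h0 (Real.rpow_pos_of_pos (by exact_mod_cast hn) b).ne'
  · have := (tendsto_rpow_neg_atTop (sub_pos.2 h)).comp tendsto_natCast_atTop_atTop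
    refine this.congr' ?_
    filter_upwards [eventually_ge_atTop 1] with n hn
    rw [Function.comp_apply, ← Real.rpow_sub (by exact_mod_cast hn), neg_sub]

theorem isBigO_natCast_add_one_pow (s : ℕ) :
    (fun n : ℕ => ((n : ℝ) + 1) ^ s) =O[atTop] fun n => (n : ℝ) ^ (s : ℝ) := by
  refine IsBigO.of_bound (2 ^ s) ?_
  filter_upwards [eventually_ge_atTop 1] with n hn
  have hn : (1 : ℝ) ≤ n := by exact_mod_cast hn
  rw [Real.rpow_natCast, Real.norm_of_nonneg (by positivity), Real.norm_of_nonneg (by positivity),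
    ← mul_pow]
  gcongr
  linarith

theorem isBigO_natCast_pow_choose (s : ℕ) :
    (fun n : ℕ => (n : ℝ) ^ (s : ℝ)) =O[atTop] fun n => ((n + s).choose s : ℝ) := by
  refine IsBigO.of_bound (s.factorial : ℝ) (Eventually.of_forall fun n => ?_)
  have h := Nat.pow_le_choose (α := ℝ) s (n + s)
  rw [show n + s + 1 - s = n + 1 by omega, div_le_iff₀ (by positivity)] at h
  rw [Real.rpow_natCast, Real.norm_of_nonneg (by positivity), Real.norm_natCast, mul_comm]
  refine le_trans ?_ h
  push_cast
  gcongr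
  linarith

section Asymptotics

variable {F : Set ℕ} {β : ℝ}

theorem isBigO_diffBound
    (hf : (fun n => ((F ∩ Set.Iic n).ncard : ℝ)) =O[atTop] fun n => (n : ℝ) ^ β)
    (hβ : β ≤ 1) (s : ℕ) :
    (fun n => (diffBound F s n : ℝ)) =O[atTop]
      fun n => (n : ℝ) ^ max ((s : ℝ) - 1) (s * β) := by
  induction s with
  | zero => simpa [diffBound] using isBigO_refl (fun _ : ℕ => (1 : ℝ)) atTop
  | succ s ih =>
    have hsplit : (fun n => (diffBound F (s + 1) n : ℝ)) =
        (fun n : ℕ => ((n : ℝ) + 1) ^ s) + (fun n => ((F ∩ Set.Iic n).ncard : ℝ)) *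
          fun n => (diffBound F s n : ℝ) := by
      ext n; simp [diffBound]
    rw [hsplit]
    push_cast
    refine IsBigO.add ((isBigO_natCast_add_one_pow s).trans
      (isBigO_natCast_rpow_of_le (le_max_of_le_left (by linarith))))
      (hf.mul_atTop_rpow_natCast_of_isBigO_rpow _ _ _ ih ?_)
    rw [add_max]
    exact max_le_max (by linarith) (by linarith)

theorem eventually_error_lt_choose
    (hf : (fun n => ((F ∩ Set.Iic n).ncard : ℝ)) =O[atTop] fun n => (n : ℝ) ^ β)
    (u : ℕ) (hβ1 : β < 1) (hβ2 : (u + 2) * β < u + 1) :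
    ∀ᶠ n in atTop, (u + 2) * (F ∩ Set.Iic n).ncard * (n + 1) ^ u +
      (F ∩ Set.Iic n).ncard * diffBound F (u + 1) n < (n + u + 1).choose (u + 1) := by
  have hc : β + max (u : ℝ) ((u + 1) * β) < ((u + 1 : ℕ) : ℝ) := by
    rw [add_max, Nat.cast_succ]
    exact max_lt (by linarith) (by linarith)
  have hsplit : (fun n => (((u + 2) * (F ∩ Set.Iic n).ncard * (n + 1) ^ u +
      (F ∩ Set.Iic n).ncard * diffBound F (u + 1) n : ℕ) : ℝ)) =
      (fun n => ((u : ℝ) + 2) * (((F ∩ Set.Iic n).ncard : ℝ) * ((n : ℝ) + 1) ^ u)) +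
        (fun n => ((F ∩ Set.Iic n).ncard : ℝ)) * fun n => (diffBound F (u + 1) n : ℝ) := by
    ext n; simp only [Pi.add_apply, Pi.mul_apply]; push_cast; ring
  have herr : (fun n => (((u + 2) * (F ∩ Set.Iic n).ncard * (n + 1) ^ u +
      (F ∩ Set.Iic n).ncard * diffBound F (u + 1) n : ℕ) : ℝ)) =O[atTop]
        fun n => (n : ℝ) ^ (β + max (u : ℝ) ((u + 1) * β)) := by
    rw [hsplit]
    refine IsBigO.add (IsBigO.const_mul_left ?_ _)
      (hf.mul_atTop_rpow_natCast_of_isBigO_rpow _ _ _ (isBigO_diffBound hf hβ1.le (u + 1)) ?_)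
    · exact hf.mul_atTop_rpow_natCast_of_isBigO_rpow _ _ _ (isBigO_natCast_add_one_pow u)
        (by simp)
    · push_cast; simp
  have hlo := (herr.trans_isLittleO (isLittleO_natCast_rpow_of_lt hc)).trans_isBigO
    (isBigO_natCast_pow_choose (u + 1))
  filter_upwards [hlo.eventuallyLT_norm_of_eventually_pos
    (Eventually.of_forall fun n => by simp [Nat.choose_pos])] with n hn
  simpa only [Real.norm_natCast, Nat.cast_lt, ← add_assoc] using hn

theorem eventually_backDiff_r_compl_pos
    (hf : (fun n => ((F ∩ Set.Iic n).ncard : ℝ)) =O[atTop] fun n => (n : ℝ) ^ β)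
    (u : ℕ) (hβ1 : β < 1) (hβ2 : (u + 2) * β < u + 1) :
    ∀ᶠ n in atTop, 0 < backDiff (fun m => (r (u + 3) Fᶜ m : ℤ)) n := by
  filter_upwards [eventually_error_lt_choose hf u hβ1 hβ2] with n hn
  have hchoose := choose_le_r_compl F u n
  have hdiff : (r (u + 2) Fᶜ n : ℤ) - (F ∩ Set.Iic n).ncard * diffBound F (u + 1) n ≤
      backDiff (fun m => (r (u + 3) Fᶜ m : ℤ)) n :=
    backDiff_r_compl_ge F (u + 1) n
  zify at hn
  linarith

end Asymptotics

theorem stmt_0_general (k : ℕ) (hk : 3 ≤ k) (F : Set ℕ)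
    (f' : ℕ → ℕ) (hf' : ∀ n, f' n = (F ∩ Set.Iic n).ncard)
    (α : ℝ) (hα : α < ((k : ℝ) - 2) / k)
    (ho : Filter.Tendsto (fun n : ℕ => (f' n : ℝ) / (n : ℝ) ^ α)
      Filter.atTop (nhds 0))
    (A : Set ℕ) (hA : A = Set.univ \ F) :
    ∃ N : ℕ, ∀ n ≥ N, r k A n < r k A (n + 1) := by
  obtain ⟨u, rfl⟩ : ∃ u, k = u + 3 := ⟨k - 3, by omega⟩
  obtain rfl : A = Fᶜ := hA.trans (Set.compl_eq_univ_sdiff F).symm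
  obtain rfl : f' = fun n => (F ∩ Set.Iic n).ncard := funext hf'
  rw [lt_div_iff₀ (by positivity)] at hα
  push_cast at hα
  have hα1 : α < 1 := by nlinarith
  have hα2 : (u + 2) * α < u + 1 := by nlinarith
  obtain ⟨N, hN⟩ := eventually_atTop.1 (eventually_backDiff_r_compl_pos
    (isBigO_atTop_natCast_rpow_of_tendsto_div_rpow ho) u hα1 hα2)
  refine ⟨N, fun n hn => ?_⟩
  simpa [backDiff] using hN (n + 1) (by omega)

theorem stmt_0 (k : ℕ) (hk : 3 ≤ k) (F : Set ℕ) (hF : 0 ∉ F)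
    (f' : ℕ → ℕ) (hf' : ∀ n, f' n = (F ∩ Set.Iic n).ncard)
    (α : ℝ) (hα : α < ((k : ℝ) - 2) / k)
    (ho : Filter.Tendsto (fun n : ℕ => (f' n : ℝ) / (n : ℝ) ^ α)
      Filter.atTop (nhds 0))
    (A : Set ℕ) (hA : A = Set.univ \ F) :
    ∃ N : ℕ, ∀ n ≥ N, r k A n < r k A (n + 1) :=
  stmt_0_general k hk F f' hf' α hα ho A hA
end

section
/- Let F = {2^{m+2} − 1 : m ∈ ℕ} = {3, 7, 15, 31, …} and A = ℕ \ F. Then the sequence (r(3,A,n))_{n≥0} is strictly increasing right from the start: r(3,A,0) ≥ 1 and r(3,A,n) < r(3,A,n+1) for all n ≥ 0. -/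
open PowerSeries Finset

section Semiring
variable {R : Type*} [Semiring R]

variable (R) in
noncomputable def indicatorSeries (A : Set ℕ) : R⟦X⟧ := mk (A.indicator 1)

theorem coeff_mul_mk_one (φ : R⟦X⟧) (n : ℕ) :
    coeff n (φ * PowerSeries.mk 1) = ∑ i ∈ range (n + 1), coeff i φ := by
  simp [coeff_mul, Nat.sum_antidiagonal_eq_sum_range_succ_mk]

theorem coeff_indicatorSeries_mul_mk_one (A : Set ℕ) (n : ℕ) :
    coeff n (indicatorSeries R A * PowerSeries.mk 1 : R⟦X⟧) = (A ∩ Set.Iic n).ncard := by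
  classical
  have hset : A ∩ Set.Iic n = ↑((range (n + 1)).filter (· ∈ A)) := by
    ext i; simp [and_comm]
  rw [coeff_mul_mk_one, hset, Set.ncard_coe_finset]
  simp [indicatorSeries, Set.indicator_apply, sum_boole]

end Semiring

section CommSemiring
variable {R : Type*} [CommSemiring R]

theorem PowerSeries.coeff_pow_eq_sum_piAntidiag (φ : R⟦X⟧) (k n : ℕ) :
    coeff n (φ ^ k) = ∑ c ∈ piAntidiag (univ : Finset (Fin k)) n, ∏ i, coeff (c i) φ := by
  rw [← Fin.prod_const, coeff_prod, finsuppAntidiag, sum_map,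
    ← sum_attach (piAntidiag univ n)]
  rfl

theorem coeff_indicatorSeries_pow (A : Set ℕ) (k n : ℕ) :
    coeff n (indicatorSeries R A ^ k) = r k A n := by
  classical
  have hset : {c : Fin k → ℕ | (∀ i, c i ∈ A) ∧ ∑ i, c i = n}
      = ↑((piAntidiag (univ : Finset (Fin k)) n).filter fun c => ∀ i, c i ∈ A) := by
    ext c; simp [and_comm]
  simp only [coeff_pow_eq_sum_piAntidiag, indicatorSeries, coeff_mk, Set.indicator_apply,
    Pi.one_apply, prod_ite_zero, prod_const_one, mem_univ, true_imp_iff, sum_boole]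
  rw [r, hset, Set.ncard_coe_finset]

end CommSemiring

theorem PowerSeries.coeff_succ_one_sub_X_mul {R : Type*} [Ring R] (φ : R⟦X⟧) (n : ℕ) :
    coeff (n + 1) ((1 - X) * φ) = coeff (n + 1) φ - coeff n φ := by
  rw [sub_mul, one_mul, map_sub, coeff_succ_X_mul]

theorem indicatorSeries_compl {R : Type*} [Ring R] (A : Set ℕ) :
    indicatorSeries R Aᶜ = PowerSeries.mk 1 - indicatorSeries R A := by
  ext n; simp [indicatorSeries, Set.indicator_compl]

theorem r_zero_of_zero_mem {A : Set ℕ} (h : 0 ∈ A) (k : ℕ) : r k A 0 = 1 := by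
  have := coeff_indicatorSeries_pow (R := ℤ) A k 0
  rw [coeff_zero_eq_constantCoeff, map_pow, ← coeff_zero_eq_constantCoeff] at this
  simpa [indicatorSeries, h] using this.symm

theorem r_three_compl_succ_sub (F : Set ℕ) (n : ℕ) :
    (r 3 Fᶜ (n + 1) : ℤ) - r 3 Fᶜ n = (n + 2) - 3 * (F ∩ Set.Iic (n + 1)).ncard
      + 3 * r 2 F (n + 1) - r 3 F (n + 1) + r 3 F n := by
  set S : ℤ⟦X⟧ := PowerSeries.mk 1
  set V := indicatorSeries ℤ F
  have hS : S * (1 - X) = 1 := mk_one_mul_one_sub_eq_one ℤ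
  have hexpand : (1 - X) * (S - V) ^ 3 = S * S - 3 • (V * S) + 3 • V ^ 2 - (1 - X) * V ^ 3 := by
    linear_combination (S ^ 2 - 3 * S * V + 3 * V ^ 2) * hS
  have hSS : coeff (n + 1) (S * S) = n + 2 := by
    norm_num [S, coeff_mul_mk_one, add_assoc]
  simp only [← coeff_indicatorSeries_pow (R := ℤ), ← coeff_indicatorSeries_mul_mk_one (R := ℤ)]
  rw [← coeff_succ_one_sub_X_mul, indicatorSeries_compl, hexpand]
  simp only [map_sub, map_add, map_nsmul, coeff_succ_one_sub_X_mul, hSS]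
  simp only [nsmul_eq_mul]
  ring

theorem r_three_le_sq_ncard {F : Set ℕ} {d : ℕ} (hF : ∀ x ∈ F, d ≤ x) (m : ℕ) :
    r 3 F m ≤ (F ∩ Set.Iic (m - 2 * d)).ncard ^ 2 := by
  set T := F ∩ Set.Iic (m - 2 * d)
  have hT : T.Finite := (Set.finite_Iic _).inter_of_right F
  rw [sq, ← Set.ncard_prod]
  refine Set.ncard_le_ncard_of_injOn (fun c => (c 0, c 1)) ?_ ?_ (hT.prod hT)
  · rintro c ⟨hcF, hsum⟩
    have h1 := hF _ (hcF 1)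
    have h2 := hF _ (hcF 2)
    have h0 := hF _ (hcF 0)
    simp only [Fin.sum_univ_three] at hsum
    exact ⟨⟨hcF 0, by simp; omega⟩, hcF 1, by simp; omega⟩
  · rintro c ⟨-, hc⟩ c' ⟨-, hc'⟩ h
    simp only [Fin.sum_univ_three, Prod.mk.injEq] at hc hc' h
    ext i; fin_cases i <;> simp <;> omega

theorem r_three_compl_lt_succ {F : Set ℕ} (hF : ∀ x ∈ F, 3 ≤ x) {n : ℕ}
    (hsparse : 3 * (F ∩ Set.Iic (n + 1)).ncard + (F ∩ Set.Iic (n + 1 - 6)).ncard ^ 2 ≤ n + 1) :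
    r 3 Fᶜ n < r 3 Fᶜ (n + 1) := by
  have hdiff := r_three_compl_succ_sub F n
  have htriples : r 3 F (n + 1) ≤ (F ∩ Set.Iic (n + 1 - 6)).ncard ^ 2 :=
    r_three_le_sq_ncard hF (n + 1)
  zify at hsparse htriples
  omega

theorem sq_add_three_mul_add_four_le_two_pow {t : ℕ} (ht : 4 ≤ t) :
    t ^ 2 + 3 * t + 4 ≤ 2 ^ (t + 1) := by
  induction t, ht using Nat.le_induction with
  | base => norm_num
  | succ t ht ih => rw [pow_succ 2 (t + 1)]; nlinarith

theorem three_mul_log_add_sq_log_le (m : ℕ) :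
    3 * (Nat.log 2 (m + 1) - 1) + (Nat.log 2 (m - 6 + 1) - 1) ^ 2 ≤ m := by
  set a := Nat.log 2 (m + 1)
  set b := Nat.log 2 (m - 6 + 1)
  have ha : 2 ^ a ≤ m + 1 := Nat.pow_log_le_self 2 (by omega)
  have hb : 2 ^ b ≤ m - 6 + 1 := Nat.pow_log_le_self 2 (by omega)
  have hba : b ≤ a := Nat.log_mono_right (by omega)
  clear_value a b
  rcases lt_or_ge a 6 with hsmall | hlarge
  · interval_cases a <;> interval_cases b <;> omega
  rcases hba.lt_or_eq with hlt | rfl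
  · obtain ⟨t, rfl⟩ : ∃ t, a = t + 2 := ⟨a - 2, by omega⟩
    have := sq_add_three_mul_add_four_le_two_pow (t := t) (by omega)
    have : (b - 1) ^ 2 ≤ t ^ 2 := Nat.pow_le_pow_left (by omega) 2
    rw [pow_succ] at ha
    omega
  · obtain ⟨t, rfl⟩ : ∃ t, b = t + 1 := ⟨b - 1, by omega⟩
    have := sq_add_three_mul_add_four_le_two_pow (t := t) (by omega)
    rw [pow_succ] at hb
    rw [Nat.add_sub_cancel]
    omega

def mersenneSet : Set ℕ := Set.range fun m => mersenne (m + 2)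

theorem three_le_of_mem_mersenneSet {x : ℕ} (hx : x ∈ mersenneSet) : 3 ≤ x := by
  obtain ⟨m, rfl⟩ := hx
  have := succ_mersenne (m + 2)
  have : 2 ^ 2 ≤ 2 ^ (m + 2) := Nat.pow_le_pow_right two_pos (by omega)
  dsimp only
  omega

theorem ncard_mersenneSet_inter_Iic_le (m : ℕ) :
    (mersenneSet ∩ Set.Iic m).ncard ≤ Nat.log 2 (m + 1) - 1 := by
  calc (mersenneSet ∩ Set.Iic m).ncard
      ≤ (((range (Nat.log 2 (m + 1) - 1)).image fun i => mersenne (i + 2) : Finset ℕ) :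
          Set ℕ).ncard := by
        refine Set.ncard_le_ncard ?_ (Finset.finite_toSet _)
        rintro _ ⟨⟨i, rfl⟩, hi⟩
        have hpow : 2 ^ (i + 2) ≤ m + 1 := by
          rw [← succ_mersenne]; exact Nat.succ_le_succ hi
        have := Nat.le_log_of_pow_le one_lt_two hpow
        simp only [coe_image, coe_range, Set.mem_image, Set.mem_Iio]
        exact ⟨i, by omega, rfl⟩
    _ ≤ Nat.log 2 (m + 1) - 1 := by
        rw [Set.ncard_coe_finset]; exact card_image_le.trans (card_range _).le

theorem stmt_1 (F : Set ℕ) (hF : F = {x : ℕ | ∃ m : ℕ, x = 2 ^ (m + 2) - 1})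
    (A : Set ℕ) (hA : A = Set.univ \ F) :
    1 ≤ r 3 A 0 ∧ ∀ n : ℕ, r 3 A n < r 3 A (n + 1) := by
  have hFM : F = mersenneSet := by
    rw [hF]; ext x; simp [mersenneSet, mersenne, eq_comm]
  rw [hA, ← Set.compl_eq_univ_sdiff, hFM]
  have hM : ∀ x ∈ mersenneSet, 3 ≤ x := fun _ => three_le_of_mem_mersenneSet
  refine ⟨(r_zero_of_zero_mem (fun h0 => by simpa using hM 0 h0) 3).ge, fun n => ?_⟩
  refine r_three_compl_lt_succ hM ?_
  calc 3 * (mersenneSet ∩ Set.Iic (n + 1)).ncard + (mersenneSet ∩ Set.Iic (n + 1 - 6)).ncard ^ 2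
      ≤ 3 * (Nat.log 2 (n + 1 + 1) - 1) + (Nat.log 2 (n + 1 - 6 + 1) - 1) ^ 2 := by
        gcongr <;> exact ncard_mersenneSet_inter_Iic_le _
    _ ≤ n + 1 := three_mul_log_add_sq_log_le (n + 1)
end

section
/- Let A ⊆ ℕ and let k ≥ 1 be an integer. Suppose r(k,A,0) ≥ 1 and r(k,A,n) < r(k,A,n+1) for all n ≥ 0 (i.e., the sequence (r(k,A,n)) is strictly increasing from the start). Then for every integer k' ≥ k, the sequence (r(k',A,n))_{n≥0} also satisfies r(k',A,0) ≥ 1 and r(k',A,n) < r(k',A,n+1) for all n ≥ 0. -/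
/-!
Splitting off the first part gives `r (k+1) A n = ∑_{a ∈ A, a ≤ n} r k A (n - a)`. Once `0 ∈ A`
(forced by `r k A 0 ≥ 1`), the term `a = 0` equals `r k A n`, so `r (k+1) A 0 = r k A 0`, and
passing from `n` to `n + 1` raises every term weakly, the term `a = 0` strictly, and adds the
term `a = n + 1`. Induction on `k'` finishes the proof.
-/

open Finset

namespace RepresentationCount

variable {A : Set ℕ} {k : ℕ}

lemma r_eq_card [DecidablePred (· ∈ A)] (n : ℕ) :
    r k A n = #{c ∈ Nat.antidiagonalTuple k n | ∀ i, c i ∈ A} := by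
  rw [r, ← Set.ncard_coe_finset]
  congr 1
  ext c
  simp only [coe_filter, Set.mem_ofPred_eq, Nat.mem_antidiagonalTuple]
  exact and_comm

lemma card_filter_antidiagonalTuple_succ_head [DecidablePred (· ∈ A)] {n a : ℕ}
    (hA : a ∈ A) (ha : a ≤ n) :
    #{c ∈ {c ∈ Nat.antidiagonalTuple (k + 1) n | ∀ i, c i ∈ A} | c 0 = a} = r k A (n - a) := by
  rw [r_eq_card]
  refine card_nbij' Fin.tail (fun d => Fin.cons a d) ?_ ?_ ?_ ?_
  · intro c hc
    simp only [mem_coe, mem_filter, Nat.mem_antidiagonalTuple] at hc ⊢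
    obtain ⟨⟨hsum, hmem⟩, rfl⟩ := hc
    rw [Fin.sum_univ_succ] at hsum
    exact ⟨by simp only [Fin.tail]; omega, fun i => hmem i.succ⟩
  · intro d hd
    simp only [mem_coe, mem_filter, Nat.mem_antidiagonalTuple] at hd ⊢
    refine ⟨⟨?_, Fin.cases hA hd.2⟩, rfl⟩
    simp only [Fin.sum_univ_succ, Fin.cons_zero, Fin.cons_succ, hd.1]
    omega
  · intro c hc
    simp only [mem_coe, mem_filter] at hc
    simp only [← hc.2, Fin.cons_self_tail]
  · intro d _
    simp only [Fin.tail_cons]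

lemma r_succ [DecidablePred (· ∈ A)] (n : ℕ) :
    r (k + 1) A n = ∑ a ∈ range (n + 1), if a ∈ A then r k A (n - a) else 0 := by
  rw [r_eq_card, card_eq_sum_card_fiberwise (f := fun c => c 0) (t := range (n + 1))]
  · refine sum_congr rfl fun a ha => ?_
    split_ifs with hA
    · exact card_filter_antidiagonalTuple_succ_head hA (Nat.lt_succ_iff.mp (mem_range.mp ha))
    · refine card_eq_zero.mpr (filter_eq_empty_iff.mpr ?_)
      rintro c hc rfl
      exact hA ((mem_filter.mp hc).2 0)
  · intro c hc
    simp only [coe_filter, Set.mem_ofPred_eq, Nat.mem_antidiagonalTuple] at hc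
    rw [coe_range, Set.mem_Iio, Nat.lt_succ_iff, ← hc.1]
    exact single_le_sum (fun i _ => Nat.zero_le (c i)) (mem_univ 0)

lemma zero_mem_of_r_zero_ne_zero (hk : k ≠ 0) (h : r k A 0 ≠ 0) : 0 ∈ A := by
  obtain ⟨c, hmem, hsum⟩ := Set.nonempty_of_ncard_ne_zero h
  have hc : c ⟨0, Nat.pos_of_ne_zero hk⟩ = 0 := sum_eq_zero_iff.mp hsum _ (mem_univ _)
  exact hc ▸ hmem _

lemma r_succ_zero (h0A : 0 ∈ A) : r (k + 1) A 0 = r k A 0 := by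
  classical
  simp [r_succ, h0A]

lemma strictMono_r_succ (h0A : 0 ∈ A) (hmono : StrictMono (r k A)) :
    StrictMono (r (k + 1) A) := by
  classical
  refine strictMono_nat_of_lt_succ fun n => ?_
  rw [r_succ, r_succ]
  calc ∑ a ∈ range (n + 1), (if a ∈ A then r k A (n - a) else 0)
      < ∑ a ∈ range (n + 1), (if a ∈ A then r k A (n + 1 - a) else 0) := by
        refine sum_lt_sum (fun a _ => ?_) ⟨0, mem_range.mpr n.succ_pos, ?_⟩
        · split_ifs
          exacts [hmono.monotone (by omega), le_rfl]
        · simpa [h0A] using hmono n.lt_succ_self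
    _ ≤ ∑ a ∈ range (n + 2), (if a ∈ A then r k A (n + 1 - a) else 0) :=
        sum_le_sum_of_subset (range_subset_range.mpr (by omega))

end RepresentationCount

open RepresentationCount in
theorem stmt_3 (A : Set ℕ) (k : ℕ) (hk : 1 ≤ k)
    (h0 : 1 ≤ r k A 0) (hinc : ∀ n : ℕ, r k A n < r k A (n + 1)) :
    ∀ k' : ℕ, k ≤ k' →
      1 ≤ r k' A 0 ∧ ∀ n : ℕ, r k' A n < r k' A (n + 1) := by
  have h0A : 0 ∈ A := zero_mem_of_r_zero_ne_zero (k := k) (by omega) (by omega)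
  intro k' hk'
  induction k', hk' using Nat.le_induction with
  | base => exact ⟨h0, hinc⟩
  | succ m _ ih =>
    have hmono := strictMono_r_succ h0A (strictMono_nat_of_lt_succ ih.2)
    exact ⟨(r_succ_zero h0A).symm ▸ ih.1, fun n => hmono n.lt_succ_self⟩
end

section
/- Let F = {2^{m+2} − 1 : m ∈ ℕ}. Then for every n ∈ ℕ, r(3,F,n) ≤ 6; that is, the number of ordered triples (a,b,c) ∈ F × F × F with a + b + c = n is at most 6. -/
/-!
Writing each part as `2 ^ e - 1`, it suffices to count the triples `e` with
`2 ^ e₀ + 2 ^ e₁ + 2 ^ e₂ = N`. A finite set of naturals is determined by `∑ i ∈ s, 2 ^ i`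
(binary expansion). Hence if some solution has distinct entries, then so does every solution,
all with the same set of entries, and they are among its `3!` rearrangements. Otherwise every
solution is `(u, u, v)` up to the position of `v`, and `N = 2 ^ (u + 1) + 2 ^ v` determines the
pair `(u + 1, v)` up to order, leaving at most `3 * 2` solutions.
-/

open Finset Function Equiv

def powSumSols (k N : ℕ) : Set (Fin k → ℕ) := {e | ∑ i, 2 ^ e i = N}

lemma powSumSols_finite (k N : ℕ) : (powSumSols k N).Finite := by
  refine (Set.Finite.pi (t := fun _ => Set.Iio N) fun _ => Set.finite_Iio N).subset ?_
  intro e he i _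
  calc e i < 2 ^ e i := Nat.lt_two_pow_self
    _ ≤ ∑ j, 2 ^ e j :=
      single_le_sum (f := fun j => 2 ^ e j) (fun _ _ => Nat.zero_le _) (mem_univ i)
    _ = N := he

lemma r_le_ncard_powSumSols (k n : ℕ) :
    r k {x | ∃ m, x = 2 ^ (m + 2) - 1} n ≤ (powSumSols k (n + k)).ncard := by
  have two_pow_log : ∀ x ∈ {x | ∃ m, x = 2 ^ (m + 2) - 1}, 2 ^ Nat.log 2 (x + 1) = x + 1 := by
    rintro _ ⟨m, rfl⟩
    rw [Nat.sub_add_cancel Nat.one_le_two_pow, Nat.log_pow Nat.one_lt_two]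
  refine Set.ncard_le_ncard_of_injOn (fun c i => Nat.log 2 (c i + 1)) ?_ ?_ (powSumSols_finite _ _)
  · rintro c ⟨hc, rfl⟩
    simp only [powSumSols, Set.mem_ofPred_eq, two_pow_log _ (hc _), sum_add_distrib, sum_const,
      card_univ, Fintype.card_fin, smul_eq_mul, mul_one]
  · intro c ⟨hc, _⟩ d ⟨hd, _⟩ hcd
    funext i
    have h1 := two_pow_log _ (hc i)
    rw [show Nat.log 2 (c i + 1) = Nat.log 2 (d i + 1) from congrFun hcd i,
      two_pow_log _ (hd i)] at h1
    omega

lemma exists_perm_eq_comp {ι α : Type*} [Fintype ι] [DecidableEq α] {f g : ι → α}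
    (hf : Injective f) (hg : Injective g) (h : univ.image f = univ.image g) :
    ∃ σ : Perm ι, f = g ∘ σ := by
  have hr : Set.range f = Set.range g := by
    simpa [← coe_inj, coe_image, coe_univ, Set.image_univ] using h
  refine ⟨(ofInjective f hf).trans ((setCongr hr).trans (ofInjective g hg).symm),
    funext fun i => ?_⟩
  simp [apply_ofInjective_symm]

lemma two_pow_add_two_pow_eq_sum (a b : ℕ) :
    ∃ s : Finset ℕ, s.card ≤ 2 ∧ 2 ^ a + 2 ^ b = ∑ i ∈ s, 2 ^ i := by
  rcases eq_or_ne a b with rfl | hab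
  · exact ⟨{a + 1}, by simp, by simp [pow_succ, mul_two]⟩
  · exact ⟨{a, b}, card_le_two, (sum_pair hab).symm⟩

lemma two_pow_add_two_pow_inj {a b c d : ℕ} (h : 2 ^ a + 2 ^ b = 2 ^ c + 2 ^ d) :
    (a = c ∧ b = d) ∨ (a = d ∧ b = c) := by
  rcases eq_or_ne a b with rfl | hab <;> rcases eq_or_ne c d with rfl | hcd
  · have : 2 ^ (a + 1) = 2 ^ (c + 1) := by simpa [pow_succ, mul_two] using h
    have := Nat.pow_right_injective le_rfl this
    omega
  · have := geomSum_injective le_rfl (show ∑ i ∈ {a + 1}, 2 ^ i = ∑ i ∈ {c, d}, 2 ^ i by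
      simpa [sum_pair hcd, pow_succ, mul_two] using h)
    simpa [hcd] using congrArg card this
  · have := geomSum_injective le_rfl (show ∑ i ∈ {a, b}, 2 ^ i = ∑ i ∈ {c + 1}, 2 ^ i by
      simpa [sum_pair hab, pow_succ, mul_two] using h)
    simpa [hab] using congrArg card this
  · have := geomSum_injective le_rfl (show ∑ i ∈ {a, b}, 2 ^ i = ∑ i ∈ {c, d}, 2 ^ i by
      simpa [sum_pair hab, sum_pair hcd] using h)
    simpa [← coe_inj, coe_pair, Set.pair_eq_pair_iff] using this

lemma sum_two_pow_eq_sum_image {k : ℕ} {e : Fin k → ℕ} (he : Injective e) :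
    ∑ i, 2 ^ e i = ∑ x ∈ univ.image e, 2 ^ x :=
  (sum_image fun _ _ _ _ h => he h).symm

lemma image_eq_of_mem_powSumSols {k N : ℕ} {s t : Fin k → ℕ} (hs : s ∈ powSumSols k N)
    (ht : t ∈ powSumSols k N) (hs_inj : Injective s) (ht_inj : Injective t) :
    univ.image s = univ.image t :=
  geomSum_injective le_rfl <| by
    simp only [← sum_two_pow_eq_sum_image, hs_inj, ht_inj]
    exact hs.trans ht.symm

lemma exists_eq_update_of_not_injective {t : Fin 3 → ℕ} (ht : ¬Injective t) :
    ∃ i u v, t = update (fun _ => u) i v := by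
  simp only [Injective, not_forall] at ht
  obtain ⟨a, b, hab, hne⟩ := ht
  obtain ⟨i, hia, hib⟩ : ∃ i, i ≠ a ∧ i ≠ b := by
    fin_cases a <;> fin_cases b <;> first | exact absurd rfl hne | decide
  refine ⟨i, t a, t i, funext fun j => ?_⟩
  rcases eq_or_ne j i with rfl | hji
  · simp
  have fin_three : ∀ a b i j : Fin 3,
       a ≠ b → i ≠ a → i ≠ b → j ≠ i → j = a ∨ j = b := by
    decide
  rcases fin_three a b i j hne hia hib hji with rfl | rfl <;> simp [hji, hab]

lemma sum_two_pow_update (i : Fin 3) (u v : ℕ) :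
    ∑ j, 2 ^ update (fun _ => u) i v j = 2 ^ (u + 1) + 2 ^ v := by
  fin_cases i <;> simp [Fin.sum_univ_three, update, pow_succ] <;> ring

lemma injective_of_mem_powSumSols_three {N : ℕ} {s t : Fin 3 → ℕ} (hs : s ∈ powSumSols 3 N)
    (ht : t ∈ powSumSols 3 N) (hs_inj : Injective s) : Injective t := by
  by_contra ht_inj
  obtain ⟨i, u, v, rfl⟩ := exists_eq_update_of_not_injective ht_inj
  obtain ⟨S, hS, hsum⟩ := two_pow_add_two_pow_eq_sum (u + 1) v
  have : univ.image s = S := geomSum_injective le_rfl <| by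
    show ∑ x ∈ univ.image s, 2 ^ x = ∑ x ∈ S, 2 ^ x
    rw [← sum_two_pow_eq_sum_image hs_inj, ← hsum, ← sum_two_pow_update i u v]
    exact hs.trans ht.symm
  rw [← this, card_image_of_injective _ hs_inj, card_univ, Fintype.card_fin] at hS
  omega

lemma powSumSols_three_subset_range_comp {N : ℕ} {s : Fin 3 → ℕ} (hs : s ∈ powSumSols 3 N)
    (hs_inj : Injective s) : powSumSols 3 N ⊆ Set.range fun σ : Perm (Fin 3) => s ∘ σ := by
  intro t ht
  have ht_inj := injective_of_mem_powSumSols_three hs ht hs_inj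
  obtain ⟨σ, hσ⟩ := exists_perm_eq_comp ht_inj hs_inj
    (image_eq_of_mem_powSumSols ht hs ht_inj hs_inj)
  exact ⟨σ, hσ.symm⟩

def twoPowPairs (N : ℕ) : Set (ℕ × ℕ) := {p | 2 ^ p.1 + 2 ^ p.2 = N}

lemma exists_twoPowPairs_subset_pair (N : ℕ) : ∃ a b, twoPowPairs N ⊆ {(a, b), (b, a)} := by
  rcases (twoPowPairs N).eq_empty_or_nonempty with h | ⟨⟨a, b⟩, hab⟩
  · exact ⟨0, 0, h ▸ Set.empty_subset _⟩
  refine ⟨a, b, fun ⟨c, d⟩ hcd => ?_⟩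
  rcases two_pow_add_two_pow_inj (hcd.trans hab.symm) with ⟨rfl, rfl⟩ | ⟨rfl, rfl⟩ <;> simp

lemma twoPowPairs_finite (N : ℕ) : (twoPowPairs N).Finite := by
  obtain ⟨a, b, h⟩ := exists_twoPowPairs_subset_pair N
  exact (Set.toFinite _).subset h

lemma ncard_twoPowPairs_le (N : ℕ) : (twoPowPairs N).ncard ≤ 2 := by
  obtain ⟨a, b, h⟩ := exists_twoPowPairs_subset_pair N
  calc (twoPowPairs N).ncard ≤ ({(a, b), (b, a)} : Set (ℕ × ℕ)).ncard := Set.ncard_le_ncard h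
    _ ≤ 2 := (Set.ncard_insert_le _ _).trans (by simp)

lemma powSumSols_three_subset_image {N : ℕ} (h : ∀ t ∈ powSumSols 3 N, ¬Injective t) :
    powSumSols 3 N ⊆ (fun x : Fin 3 × ℕ × ℕ => update (fun _ => x.2.1 - 1) x.1 x.2.2) ''
      (Set.univ ×ˢ twoPowPairs N) := by
  intro t ht
  obtain ⟨i, u, v, rfl⟩ := exists_eq_update_of_not_injective (h _ ht)
  refine ⟨(i, u + 1, v), ⟨trivial, ?_⟩, rfl⟩
  exact (sum_two_pow_update i u v).symm.trans ht

theorem ncard_powSumSols_three_le (N : ℕ) : (powSumSols 3 N).ncard ≤ 6 := by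
  by_cases h : ∃ s ∈ powSumSols 3 N, Injective s
  · obtain ⟨s, hs, hs_inj⟩ := h
    calc (powSumSols 3 N).ncard ≤ (Set.range fun σ : Perm (Fin 3) => s ∘ σ).ncard :=
          Set.ncard_le_ncard (powSumSols_three_subset_range_comp hs hs_inj)
      _ ≤ Nat.card (Perm (Fin 3)) := by
          rw [← Set.image_univ, ← Set.ncard_univ]; exact Set.ncard_image_le
      _ = 6 := by rw [Nat.card_perm, Nat.card_fin]; rfl
  · push Not at h
    have hfin := (Set.toFinite (Set.univ : Set (Fin 3))).prod (twoPowPairs_finite N)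
    calc (powSumSols 3 N).ncard ≤ (_ '' (Set.univ ×ˢ twoPowPairs N)).ncard :=
          Set.ncard_le_ncard (powSumSols_three_subset_image h) (hfin.image _)
      _ ≤ (Set.univ ×ˢ twoPowPairs N).ncard := Set.ncard_image_le hfin
      _ ≤ 6 := by
          rw [Set.ncard_prod, Set.ncard_univ, Nat.card_eq_fintype_card, Fintype.card_fin]
          linarith [ncard_twoPowPairs_le N]

theorem stmt_6 (F : Set ℕ) (hF : F = {x : ℕ | ∃ m : ℕ, x = 2 ^ (m + 2) - 1}) :
    ∀ n : ℕ, r 3 F n ≤ 6 := by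
  intro n
  subst hF
  exact (r_le_ncard_powSumSols 3 n).trans (ncard_powSumSols_three_le (n + 3))
end

section
/- Let k ≥ 3 be an integer, let F ⊆ ℕ with 0 ∉ F, and let f'(n) = |F ∩ {0,1,…,n}|. Suppose there exist constants C > 0 and c > 0 such that f'(n) ≤ C·(log n)^c for all sufficiently large n. Then for A = ℕ \ F, the sequence (r(k,A,n))_{n≥0} is eventually strictly increasing: there exists N such that r(k,A,n) < r(k,A,n+1) for all n ≥ N. -/
/-!
Call a `k`-composition of `n` bad if one of its parts lies in `F`, and let `T_j(m)` be the number
of `j`-compositions of `m`. The total count grows by `T_k(n+1) - T_k(n) = T_{k-1}(n+1)`, which is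
about `n T_{k-2}(n+1) / (k-2)`. By the union bound and the second Bonferroni inequality, the number
of bad compositions is `k ∑_{a ∈ F, a ≤ n} T_{k-1}(n-a)` up to an error of at most
`k² f(n)² T_{k-2}(n)`, and since `0 ∉ F` that main term grows by at most
`k (f(n) T_{k-2}(n+1) + 1)`.
So the bad count grows by `O(k² f(n)² T_{k-2}(n+1))`, which is smaller once `f(n)² = o(n)`, and
here `f(n)² = O((log n)^{2c})`.
-/

open Finset Filter Asymptotics Real

-- The second Bonferroni inequality.
theorem Finset.sum_card_le_card_biUnion_add_sum_card_inter {ι α : Type*} [DecidableEq ι]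
    [DecidableEq α] (s : Finset ι) (B : ι → Finset α) :
    ∑ i ∈ s, #(B i) ≤ #(s.biUnion B) + ∑ p ∈ s.offDiag, #(B p.1 ∩ B p.2) := by
  set U := s.biUnion B
  have hcount : ∀ t : Finset α, t ⊆ U → #t = ∑ x ∈ U, if x ∈ t then 1 else 0 := by
    intro t ht
    rw [← card_filter, filter_mem_eq_inter, inter_eq_right.mpr ht]
  have hB : ∀ i ∈ s, B i ⊆ U := fun i hi => subset_biUnion_of_mem B hi
  rw [sum_congr rfl fun i hi => hcount _ (hB i hi),
    sum_congr rfl fun p hp => hcount _ (inter_subset_left.trans (hB p.1 (mem_offDiag.1 hp).1)),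
    sum_comm (s := s), sum_comm (s := s.offDiag), card_eq_sum_ones U, ← sum_add_distrib]
  -- A point lying in `m` of the sets counts `m` on the left and `1 + m (m - 1)` on the right.
  refine sum_le_sum fun x _ => ?_
  have hoff : ∑ p ∈ s.offDiag, (if x ∈ B p.1 ∩ B p.2 then 1 else 0)
      = #({i ∈ s | x ∈ B i}.offDiag) := by
    rw [← card_filter]; congr 1; ext p; simp only [mem_filter, mem_offDiag, mem_inter]; tauto
  rw [← card_filter, hoff, offDiag_card]
  rcases #{i ∈ s | x ∈ B i} with _ | m
  · simp
  · rw [← Nat.mul_sub_one, Nat.add_sub_cancel]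
    have : m ≤ (m + 1) * m := Nat.le_mul_of_pos_left m (by omega)
    omega

namespace Finset.Nat

theorem card_antidiagonalTuple (k n : ℕ) :
    #(antidiagonalTuple k n) = (k + n - 1).choose n := by
  have hsym := Sym.card_sym_eq_choose (α := Fin k) n
  rw [Fintype.card_fin] at hsym
  rw [← hsym]
  exact card_eq_of_equiv_fintype
    ((Equiv.subtypeEquivRight fun _ => mem_antidiagonalTuple).trans
      (Sym.equivNatSumOfFintype (Fin k) n).symm)

theorem card_antidiagonalTuple_succ (k n : ℕ) :
    #(antidiagonalTuple (k + 1) n) = (n + k).choose k := by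
  rw [card_antidiagonalTuple, show k + 1 + n - 1 = n + k by omega, Nat.choose_symm_add]

theorem card_antidiagonalTuple_add_two_succ (k n : ℕ) :
    #(antidiagonalTuple (k + 2) (n + 1))
      = #(antidiagonalTuple (k + 1) (n + 1)) + #(antidiagonalTuple (k + 2) n) := by
  simp only [card_antidiagonalTuple_succ]
  rw [show n + 1 + (k + 1) = n + k + 1 + 1 by ring, Nat.choose_succ_succ']
  ring_nf

theorem monotone_card_antidiagonalTuple_succ (k : ℕ) :
    Monotone fun n => #(antidiagonalTuple (k + 1) n) := fun m n hmn => by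
  simp only [card_antidiagonalTuple_succ]
  exact Nat.choose_le_choose k (by omega)

theorem succ_mul_card_antidiagonalTuple_add_two (k n : ℕ) :
    (k + 1) * #(antidiagonalTuple (k + 2) n) = (n + k + 1) * #(antidiagonalTuple (k + 1) n) := by
  simp only [card_antidiagonalTuple_succ]
  rw [show n + (k + 1) = n + k + 1 by ring, Nat.add_one_mul_choose_eq, mul_comm]

theorem card_filter_apply_eq_and {k n a : ℕ} (ha : a ≤ n) (i : Fin (k + 1))
    (p : (Fin k → ℕ) → Prop) [DecidablePred p] :
    #{c ∈ antidiagonalTuple (k + 1) n | c i = a ∧ p (i.removeNth c)}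
      = #{d ∈ antidiagonalTuple k (n - a) | p d} := by
  refine card_nbij' i.removeNth (fun d : Fin k → ℕ => i.insertNth a d) ?_ ?_ ?_ ?_
  · intro c hc
    simp only [coe_filter, Set.mem_ofPred_eq, mem_antidiagonalTuple] at hc ⊢
    obtain ⟨hsum, rfl, hp⟩ := hc
    rw [Fin.sum_univ_succAbove _ i] at hsum
    exact ⟨by simp only [Fin.removeNth_apply]; omega, hp⟩
  · intro d hd
    simp only [coe_filter, Set.mem_ofPred_eq, mem_antidiagonalTuple] at hd ⊢
    refine ⟨?_, by simp, by rw [Fin.removeNth_insertNth]; exact hd.2⟩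
    rw [Fin.sum_univ_succAbove _ i]
    simp only [Fin.insertNth_apply_same, Fin.insertNth_apply_succAbove, hd.1]
    omega
  · intro c hc
    simp only [coe_filter, Set.mem_ofPred_eq] at hc
    obtain ⟨-, rfl, -⟩ := hc
    exact Fin.insertNth_self_removeNth i c
  · intro d _
    simp

variable (q : ℕ → Prop) [DecidablePred q] {k n : ℕ}

theorem card_filter_apply_and (i : Fin (k + 1))
    (p : (Fin k → ℕ) → Prop) [DecidablePred p] :
    #{c ∈ antidiagonalTuple (k + 1) n | q (c i) ∧ p (i.removeNth c)}
      = ∑ a ∈ Iic n with q a, #{d ∈ antidiagonalTuple k (n - a) | p d} := by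
  rw [card_eq_sum_card_fiberwise (f := fun c => c i) (t := {a ∈ Iic n | q a})]
  · refine sum_congr rfl fun a ha => ?_
    rw [mem_filter, mem_Iic] at ha
    rw [filter_filter, ← card_filter_apply_eq_and ha.1]
    congr 1
    refine filter_congr fun c _ => ?_
    constructor
    · rintro ⟨⟨-, hp⟩, rfl⟩; exact ⟨rfl, hp⟩
    · rintro ⟨rfl, hp⟩; exact ⟨⟨ha.2, hp⟩, rfl⟩
  · intro c hc
    simp only [coe_filter, Set.mem_ofPred_eq, mem_antidiagonalTuple] at hc
    simp only [coe_filter, Set.mem_ofPred_eq, mem_Iic]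
    exact ⟨hc.1 ▸ single_le_sum (fun j _ => Nat.zero_le (c j)) (mem_univ i), hc.2.1⟩

theorem card_filter_apply (i : Fin (k + 1)) :
    #{c ∈ antidiagonalTuple (k + 1) n | q (c i)}
      = ∑ a ∈ Iic n with q a, #(antidiagonalTuple k (n - a)) := by
  simpa only [and_true, filter_true] using card_filter_apply_and q i fun _ => True

theorem card_filter_apply_and_apply_le {i l : Fin (k + 3)} (hil : i ≠ l) :
    #{c ∈ antidiagonalTuple (k + 3) n | q (c i) ∧ q (c l)}
      ≤ #{a ∈ Iic n | q a} ^ 2 * #(antidiagonalTuple (k + 1) n) := by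
  obtain ⟨j, rfl⟩ := Fin.exists_succAbove_eq hil.symm
  calc #{c ∈ antidiagonalTuple (k + 3) n | q (c i) ∧ q (c (i.succAbove j))}
      = ∑ a ∈ Iic n with q a, ∑ b ∈ Iic (n - a) with q b,
          #(antidiagonalTuple (k + 1) (n - a - b)) :=
        (card_filter_apply_and q i fun d => q (d j)).trans
          (sum_congr rfl fun a _ => card_filter_apply q j)
    _ ≤ ∑ a ∈ Iic n with q a, ∑ b ∈ Iic n with q b, #(antidiagonalTuple (k + 1) n) := by
        refine sum_le_sum fun a _ => ?_
        calc _ ≤ ∑ b ∈ Iic (n - a) with q b, #(antidiagonalTuple (k + 1) n) :=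
              sum_le_sum fun b _ =>
                monotone_card_antidiagonalTuple_succ k (show n - a - b ≤ n by omega)
          _ ≤ _ :=
              sum_le_sum_of_subset (filter_subset_filter _ (Iic_subset_Iic.2 (Nat.sub_le n a)))
    _ = _ := by simp [sq, mul_assoc]

theorem sum_card_antidiagonalTuple_sub_succ_le (hq : ¬ q 0) :
    ∑ a ∈ Iic (n + 1) with q a, #(antidiagonalTuple (k + 2) (n + 1 - a))
      ≤ ∑ a ∈ Iic n with q a, #(antidiagonalTuple (k + 2) (n - a))
        + #{a ∈ Iic n | q a} * #(antidiagonalTuple (k + 1) (n + 1)) + 1 := by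
  have hsub : {a ∈ Iic (n + 1) | q a} ⊆ insert (n + 1) {a ∈ Iic n | q a} := by
    intro a
    simp only [mem_filter, mem_Iic, mem_insert]
    exact fun ⟨ha, hqa⟩ => (Nat.le_succ_iff.1 ha).symm.imp id fun h => ⟨h, hqa⟩
  have hstep : ∀ a ∈ {a ∈ Iic n | q a}, #(antidiagonalTuple (k + 2) (n + 1 - a))
      ≤ #(antidiagonalTuple (k + 2) (n - a)) + #(antidiagonalTuple (k + 1) (n + 1)) := by
    intro a ha
    rw [mem_filter, mem_Iic] at ha
    have ha0 : a ≠ 0 := by rintro rfl; exact hq ha.2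
    rw [show n + 1 - a = n - a + 1 by omega, card_antidiagonalTuple_add_two_succ]
    have := monotone_card_antidiagonalTuple_succ k (show n - a + 1 ≤ n + 1 by omega)
    dsimp only at this
    omega
  calc _ ≤ ∑ a ∈ insert (n + 1) {a ∈ Iic n | q a}, #(antidiagonalTuple (k + 2) (n + 1 - a)) :=
        sum_le_sum_of_subset hsub
    _ = ∑ a ∈ Iic n with q a, #(antidiagonalTuple (k + 2) (n + 1 - a)) + 1 := by
        rw [sum_insert (by simp), Nat.sub_self, antidiagonalTuple_zero_right, card_singleton,
          add_comm]
    _ ≤ ∑ a ∈ Iic n with q a, (#(antidiagonalTuple (k + 2) (n - a))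
          + #(antidiagonalTuple (k + 1) (n + 1))) + 1 := by
        gcongr with a ha
        exact hstep a ha
    _ = _ := by rw [sum_add_distrib, sum_const, smul_eq_mul]

-- The union bound at `n + 1` against Bonferroni at `n`; the first moments at `n` and `n + 1`
-- differ by little because `q 0` fails.
theorem card_filter_exists_apply_succ_le (hq : ¬ q 0) :
    #{c ∈ antidiagonalTuple (k + 3) (n + 1) | ∃ i, q (c i)}
      ≤ #{c ∈ antidiagonalTuple (k + 3) n | ∃ i, q (c i)}
        + ((k + 3) ^ 2 * (#{a ∈ Iic n | q a} ^ 2 * #(antidiagonalTuple (k + 1) n))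
          + (k + 3) * (#{a ∈ Iic n | q a} * #(antidiagonalTuple (k + 1) (n + 1)) + 1)) := by
  set B : ℕ → Fin (k + 3) → Finset (Fin (k + 3) → ℕ) :=
    fun m i => {c ∈ antidiagonalTuple (k + 3) m | q (c i)}
  have hunion : ∀ m, {c ∈ antidiagonalTuple (k + 3) m | ∃ i, q (c i)} = univ.biUnion (B m) := by
    intro m; ext c; simp [B]
  have hfirst : ∀ m, ∑ i, #(B m i)
      = (k + 3) * ∑ a ∈ Iic m with q a, #(antidiagonalTuple (k + 2) (m - a)) := by
    intro m; simp [B, card_filter_apply]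
  have hsecond : ∑ p ∈ univ.offDiag, #(B n p.1 ∩ B n p.2)
      ≤ (k + 3) ^ 2 * (#{a ∈ Iic n | q a} ^ 2 * #(antidiagonalTuple (k + 1) n)) := by
    calc _ ≤ #(univ : Finset (Fin (k + 3))).offDiag
          * (#{a ∈ Iic n | q a} ^ 2 * #(antidiagonalTuple (k + 1) n)) := by
          refine sum_le_card_nsmul _ _ _ fun p hp => ?_
          rw [← filter_and]
          exact card_filter_apply_and_apply_le q (mem_offDiag.1 hp).2.2
      _ ≤ _ := by
          gcongr
          rw [offDiag_card, card_univ, Fintype.card_fin, sq]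
          exact Nat.sub_le _ _
  have hupper := card_biUnion_le (s := univ) (t := B (n + 1))
  have hlower := sum_card_le_card_biUnion_add_sum_card_inter univ (B n)
  have hdiff := Nat.mul_le_mul_left (k + 3)
    (sum_card_antidiagonalTuple_sub_succ_le q hq (k := k) (n := n))
  rw [hfirst, ← hunion] at hupper hlower
  linarith

theorem sq_mul_add_mul_lt_card_antidiagonalTuple_add_two {f : ℕ}
    (hn : 2 * (k + 3) ^ 3 * (f + 1) ^ 2 < n) :
    (k + 3) ^ 2 * (f ^ 2 * #(antidiagonalTuple (k + 1) n))
      + (k + 3) * (f * #(antidiagonalTuple (k + 1) (n + 1)) + 1)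
      < #(antidiagonalTuple (k + 2) (n + 1)) := by
  have hX : 1 ≤ #(antidiagonalTuple (k + 1) (n + 1)) := by
    rw [card_antidiagonalTuple_succ]; exact Nat.choose_pos (by omega)
  have hX' := monotone_card_antidiagonalTuple_succ k n.le_succ
  have hY := succ_mul_card_antidiagonalTuple_add_two k (n + 1)
  set X := #(antidiagonalTuple (k + 1) (n + 1))
  set Y := #(antidiagonalTuple (k + 2) (n + 1))
  have hquad : (k + 3) ^ 2 * (f ^ 2 * #(antidiagonalTuple (k + 1) n))
      ≤ (k + 3) ^ 2 * ((f + 1) ^ 2 * X) := by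
    gcongr; omega
  have hlin : (k + 3) * (f * X + 1) ≤ (k + 3) ^ 2 * ((f + 1) ^ 2 * X) := by
    calc (k + 3) * (f * X + 1) ≤ (k + 3) * ((f + 1) * X) := by gcongr; linarith
      _ ≤ (k + 3) * (k + 3) * ((f + 1) * (f + 1) * X) := by gcongr <;> nlinarith
      _ = _ := by ring
  have hY_gt : (k + 1) * (2 * ((k + 3) ^ 2 * ((f + 1) ^ 2 * X))) < (k + 1) * Y := by
    rw [hY]
    calc (k + 1) * (2 * ((k + 3) ^ 2 * ((f + 1) ^ 2 * X)))
        ≤ (k + 3) * (2 * ((k + 3) ^ 2 * ((f + 1) ^ 2 * X))) := by gcongr; omega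
      _ = 2 * (k + 3) ^ 3 * (f + 1) ^ 2 * X := by ring
      _ < n * X := by gcongr
      _ ≤ (n + 1 + k + 1) * X := by gcongr; omega
  have := Nat.lt_of_mul_lt_mul_left hY_gt
  omega

theorem card_filter_forall_not_apply_lt_succ (hq : ¬ q 0)
    (hn : 2 * (k + 3) ^ 3 * (#{a ∈ Iic n | q a} + 1) ^ 2 < n) :
    #{c ∈ antidiagonalTuple (k + 3) n | ∀ i, ¬ q (c i)}
      < #{c ∈ antidiagonalTuple (k + 3) (n + 1) | ∀ i, ¬ q (c i)} := by
  have hsplit : ∀ m, #{c ∈ antidiagonalTuple (k + 3) m | ∀ i, ¬ q (c i)}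
      + #{c ∈ antidiagonalTuple (k + 3) m | ∃ i, q (c i)} = #(antidiagonalTuple (k + 3) m) := by
    intro m
    rw [add_comm, ← card_filter_add_card_filter_not (s := antidiagonalTuple (k + 3) m)
      (p := fun c => ∃ i, q (c i))]
    simp only [not_exists]
  have hbad := card_filter_exists_apply_succ_le q hq (k := k) (n := n)
  have hpascal : #(antidiagonalTuple (k + 3) (n + 1))
      = #(antidiagonalTuple (k + 2) (n + 1)) + #(antidiagonalTuple (k + 3) n) :=
    card_antidiagonalTuple_add_two_succ (k + 1) n
  have herror := sq_mul_add_mul_lt_card_antidiagonalTuple_add_two hn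
  have hsplit_n := hsplit n
  have hsplit_succ := hsplit (n + 1)
  omega

end Finset.Nat

theorem eventually_mul_sq_lt_of_le_log_rpow {f : ℕ → ℕ} {C c : ℝ} (D : ℕ)
    (hf : ∀ᶠ n : ℕ in atTop, (f n : ℝ) ≤ C * log n ^ c) :
    ∀ᶠ n in atTop, D * (f n + 1) ^ 2 < n := by
  have hhalf : (0 : ℝ) < 1 / 2 := one_half_pos
  have hg : (fun x : ℝ => C * log x ^ c + 1) =o[atTop] fun x => x ^ (1 / 2 : ℝ) :=
    ((isLittleO_log_rpow_rpow_atTop c hhalf).const_mul_left C).add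
      ((isLittleO_log_rpow_rpow_atTop 0 hhalf).congr_left fun x => rpow_zero _)
  have hsq : (fun x : ℝ => D * (C * log x ^ c + 1) ^ 2) =o[atTop] fun x => x := by
    refine ((hg.mul hg).const_mul_left (D : ℝ)).congr' (Eventually.of_forall fun x => by ring) ?_
    filter_upwards [eventually_gt_atTop 0] with x hx
    rw [← rpow_add hx]; norm_num
  have hreal : ∀ᶠ x : ℝ in atTop, D * (C * log x ^ c + 1) ^ 2 < x := by
    filter_upwards [hsq.bound hhalf, eventually_gt_atTop 0] with x hbound hx
    rw [Real.norm_of_nonneg (by positivity), Real.norm_of_nonneg hx.le] at hbound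
    linarith
  filter_upwards [hf, tendsto_natCast_atTop_atTop.eventually hreal] with n hfn hn
  have hle : (D : ℝ) * ((f n : ℝ) + 1) ^ 2 ≤ D * (C * log n ^ c + 1) ^ 2 := by
    gcongr
  exact_mod_cast hle.trans_lt hn

theorem r_univ_diff_eq_card (k : ℕ) (F : Set ℕ) [DecidablePred (· ∈ F)] (n : ℕ) :
    r k (Set.univ \ F) n = #{c ∈ Nat.antidiagonalTuple k n | ∀ i, c i ∉ F} := by
  rw [r, ← Set.ncard_coe_finset]
  congr 1
  ext c
  simp [Nat.mem_antidiagonalTuple, and_comm]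

theorem stmt_10_general (k : ℕ) (hk : 3 ≤ k) (F : Set ℕ) (hF : 0 ∉ F)
    (f' : ℕ → ℕ) (hf' : ∀ n, f' n = (F ∩ Set.Iic n).ncard)
    (C c : ℝ)
    (hbound : ∃ N : ℕ, ∀ n ≥ N, (f' n : ℝ) ≤ C * (Real.log n) ^ c)
    (A : Set ℕ) (hA : A = Set.univ \ F) :
    ∃ N : ℕ, ∀ n ≥ N, r k A n < r k A (n + 1) := by
  classical
  obtain ⟨K, rfl⟩ : ∃ K, k = K + 3 := ⟨k - 3, by omega⟩
  have hf'_eq : ∀ n, f' n = #{a ∈ Iic n | a ∈ F} := fun n => by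
    rw [hf', ← Set.ncard_coe_finset]
    congr 1
    ext a
    simp [and_comm]
  obtain ⟨N, hN⟩ := eventually_atTop.1 <|
    eventually_mul_sq_lt_of_le_log_rpow (2 * (K + 3) ^ 3) (eventually_atTop.2 hbound)
  refine ⟨N, fun n hn => ?_⟩
  rw [hA, r_univ_diff_eq_card, r_univ_diff_eq_card]
  exact Nat.card_filter_forall_not_apply_lt_succ (· ∈ F) hF (hf'_eq n ▸ hN n hn)

theorem stmt_10 (k : ℕ) (hk : 3 ≤ k) (F : Set ℕ) (hF : 0 ∉ F)
    (f' : ℕ → ℕ) (hf' : ∀ n, f' n = (F ∩ Set.Iic n).ncard)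
    (C c : ℝ) (hC : 0 < C) (hc : 0 < c)
    (hbound : ∃ N : ℕ, ∀ n ≥ N, (f' n : ℝ) ≤ C * (Real.log n) ^ c)
    (A : Set ℕ) (hA : A = Set.univ \ F) :
    ∃ N : ℕ, ∀ n ≥ N, r k A n < r k A (n + 1) :=
  stmt_10_general k hk F hF f' hf' C c hbound A hA
end

section
/- Let F = {2^{m+2} − 1 : m ∈ ℕ} and A = ℕ \ F. Then the sequence (r(4,A,n))_{n≥0} is strictly increasing right from the start: r(4,A,0) ≥ 1 and r(4,A,n) < r(4,A,n+1) for all n ≥ 0. (This disproves Dombi's conjecture also in the case k = 4.) -/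
open Finset

theorem r_zero_right {A : Set ℕ} (h0 : 0 ∈ A) (k : ℕ) : r k A 0 = 1 := by
  have : {c : Fin k → ℕ | (∀ i, c i ∈ A) ∧ ∑ i, c i = 0} = {0} := by
    ext c
    simp only [Set.mem_ofPred_eq, Set.mem_singleton_iff, sum_eq_zero_iff, mem_univ,
      true_implies, funext_iff, Pi.zero_apply]
    exact ⟨And.right, fun h => ⟨fun i => h i ▸ h0, h⟩⟩
  rw [r, this, Set.ncard_singleton]

section

variable {A : Set ℕ} [DecidablePred (· ∈ A)]

theorem r_eq_card_filter (k n : ℕ) :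
    r k A n = #{c ∈ Nat.antidiagonalTuple k n | ∀ i, c i ∈ A} := by
  rw [r, ← Set.ncard_coe_finset]
  congr 1
  ext c
  simp [Nat.mem_antidiagonalTuple, and_comm]

theorem r_succ_s13 (k n : ℕ) :
    r (k + 1) A n = ∑ a ∈ range (n + 1) with a ∈ A, r k A (n - a) := by
  simp only [r_eq_card_filter]
  rw [← card_sigma]
  refine card_nbij' (fun c => ⟨c 0, Fin.tail c⟩) (fun p => Fin.cons p.1 p.2) ?_ ?_ ?_ ?_
  · intro c hc
    simp only [coe_filter, Nat.mem_antidiagonalTuple, Set.mem_ofPred_eq, Fin.sum_univ_succ] at hc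
    simp only [coe_sigma, coe_filter, mem_range, Set.mem_sigma_iff, Set.mem_ofPred_eq,
      Nat.mem_antidiagonalTuple, Fin.tail]
    refine ⟨⟨by omega, hc.2 0⟩, by omega, fun i => hc.2 i.succ⟩
  · rintro ⟨a, c⟩ hc
    simp only [coe_sigma, coe_filter, mem_range, Set.mem_sigma_iff, Set.mem_ofPred_eq,
      Nat.mem_antidiagonalTuple] at hc
    simp only [coe_filter, Nat.mem_antidiagonalTuple, Set.mem_ofPred_eq, Fin.sum_cons,
      Fin.forall_fin_succ, Fin.cons_zero, Fin.cons_succ]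
    exact ⟨by omega, hc.1.2, hc.2.2⟩
  · intro c _
    exact Fin.cons_self_tail c
  · rintro ⟨a, c⟩ _
    simp

theorem r_one_s13 (n : ℕ) : r 1 A n = if n ∈ A then 1 else 0 := by
  rw [r_eq_card_filter, Nat.antidiagonalTuple_one, filter_singleton]
  by_cases h : n ∈ A <;> simp [h]

variable (A) in
def gaps (n : ℕ) : Finset ℕ := {a ∈ range (n + 1) | a ∉ A}

variable (A) in
noncomputable def gapSum (k n : ℕ) : ℕ := ∑ a ∈ gaps A n, r k A (n - a)

variable (A) in
def gapWeight (n : ℕ) : ℕ := ∑ a ∈ gaps A n, (n + 1 - a)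

theorem mem_gaps {a n : ℕ} : a ∈ gaps A n ↔ a ≤ n ∧ a ∉ A := by
  simp [gaps]

theorem gaps_mono : Monotone (gaps A) := fun _ _ h =>
  filter_subset_filter _ (range_subset_range.2 (Nat.succ_le_succ h))

theorem card_gaps_mono {m n : ℕ} (h : m ≤ n) : #(gaps A m) ≤ #(gaps A n) :=
  card_le_card (gaps_mono h)

theorem sum_gaps_succ (f : ℕ → ℕ) (n : ℕ) :
    ∑ a ∈ gaps A (n + 1), f a =
      ∑ a ∈ gaps A n, f a + if n + 1 ∈ A then 0 else f (n + 1) := by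
  have hn : n + 1 ∉ gaps A n := fun h => by have := (mem_gaps.1 h).1; omega
  by_cases h : n + 1 ∈ A
  · simp [gaps, range_add_one, filter_insert, h]
  · rw [if_neg h, add_comm (∑ a ∈ gaps A n, f a), ← sum_insert hn]
    congr 1
    rw [gaps, range_add_one, filter_insert, if_pos h]
    rfl

theorem r_succ_add_gapSum (k n : ℕ) :
    r (k + 1) A n + gapSum A k n = ∑ t ∈ range (n + 1), r k A t := by
  rw [r_succ_s13, gapSum, gaps, sum_filter_add_sum_filter_not, ← sum_range_reflect]
  refine sum_congr rfl fun t ht => congrArg _ ?_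
  have := mem_range.1 ht
  omega

theorem r_succ_add_gapSum_succ (k n : ℕ) :
    r (k + 1) A (n + 1) + gapSum A k (n + 1) = r (k + 1) A n + gapSum A k n + r k A (n + 1) := by
  rw [r_succ_add_gapSum, r_succ_add_gapSum, sum_range_succ _ (n + 1)]

theorem gapWeight_succ (n : ℕ) : gapWeight A (n + 1) = gapWeight A n + #(gaps A (n + 1)) := by
  have : gapWeight A (n + 1) = ∑ a ∈ gaps A (n + 1), (n + 1 - a) + #(gaps A (n + 1)) := by
    rw [gapWeight, card_eq_sum_ones, ← sum_add_distrib]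
    refine sum_congr rfl fun a ha => ?_
    have := (mem_gaps.1 ha).1
    omega
  rw [this, sum_gaps_succ, gapWeight]
  simp

theorem gapWeight_eq_sum_card (n : ℕ) : gapWeight A n = ∑ t ∈ range (n + 1), #(gaps A t) := by
  induction n with
  | zero =>
    rw [gapWeight, sum_range_one, card_eq_sum_ones]
    refine sum_congr rfl fun a ha => ?_
    have := (mem_gaps.1 ha).1
    omega
  | succ n ih => rw [gapWeight_succ, ih, sum_range_succ _ (n + 1)]

theorem sum_r_one_add_card_gaps (n : ℕ) :
    ∑ t ∈ range (n + 1), r 1 A t + #(gaps A n) = n + 1 := by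
  simp only [r_one_s13, sum_boole, Nat.cast_id, gaps]
  rw [card_filter_add_card_filter_not, card_range]

theorem gapSum_one_le (n : ℕ) : gapSum A 1 n ≤ #(gaps A n) := by
  rw [gapSum, card_eq_sum_ones]
  exact sum_le_sum fun a _ => by rw [r_one_s13]; split_ifs <;> omega

theorem r_two_le (n : ℕ) : r 2 A n ≤ n + 1 := by
  have : r 2 A n + gapSum A 1 n = _ := r_succ_add_gapSum 1 n
  have := sum_r_one_add_card_gaps (A := A) n
  omega

theorem le_r_two_add_card_gaps (n : ℕ) : n + 1 ≤ r 2 A n + 2 * #(gaps A n) := by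
  have : r 2 A n + gapSum A 1 n = _ := r_succ_add_gapSum 1 n
  have := sum_r_one_add_card_gaps (A := A) n
  have := gapSum_one_le (A := A) n
  omega

theorem r_two_le_succ (n : ℕ) : r 2 A n ≤ r 2 A (n + 1) + #(gaps A (n + 1)) := by
  have : r 2 A (n + 1) + _ = r 2 A n + _ + _ := r_succ_add_gapSum_succ 1 n
  have := gapSum_one_le (A := A) (n + 1)
  omega

theorem gapSum_two_le_gapWeight (n : ℕ) : gapSum A 2 n ≤ gapWeight A n :=
  sum_le_sum fun a ha => by
    have := (mem_gaps.1 ha).1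
    have := r_two_le (A := A) (n - a)
    omega

theorem gapSum_two_le_succ (h0 : 0 ∈ A) (n : ℕ) :
    gapSum A 2 n ≤ gapSum A 2 (n + 1) + #(gaps A n) ^ 2 := by
  have hterm : ∀ a ∈ gaps A n, r 2 A (n - a) ≤ r 2 A (n + 1 - a) + #(gaps A n) := by
    intro a ha
    obtain ⟨han, haA⟩ := mem_gaps.1 ha
    have ha0 : a ≠ 0 := by rintro rfl; exact haA h0
    have := r_two_le_succ (A := A) (n - a)
    have := card_gaps_mono (A := A) (show n - a + 1 ≤ n by omega)
    rw [show n + 1 - a = n - a + 1 by omega]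
    omega
  calc gapSum A 2 n ≤ ∑ a ∈ gaps A n, (r 2 A (n + 1 - a) + #(gaps A n)) := sum_le_sum hterm
    _ = ∑ a ∈ gaps A n, r 2 A (n + 1 - a) + #(gaps A n) ^ 2 := by
      rw [sum_add_distrib, sum_const, smul_eq_mul, sq]
    _ ≤ gapSum A 2 (n + 1) + #(gaps A n) ^ 2 := by
      gcongr
      exact sum_le_sum_of_subset (gaps_mono n.le_succ)

theorem r_three_succ_le (h0 : 0 ∈ A) (n : ℕ) :
    r 3 A (n + 1) ≤ r 3 A n + (n + 2) + #(gaps A n) ^ 2 := by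
  have : r 3 A (n + 1) + _ = r 3 A n + _ + _ := r_succ_add_gapSum_succ 2 n
  have := gapSum_two_le_succ h0 n
  have := r_two_le (A := A) (n + 1)
  omega

theorem le_r_three_add_gapWeight (n : ℕ) :
    (n + 1) * (n + 2) ≤ 2 * (r 3 A n + 3 * gapWeight A n) := by
  have h₁ : r 3 A n + gapSum A 2 n = _ := r_succ_add_gapSum 2 n
  have h₂ := gapSum_two_le_gapWeight (A := A) n
  have h₃ :
      ∑ t ∈ range (n + 1), (t + 1) ≤ ∑ t ∈ range (n + 1), r 2 A t + 2 * gapWeight A n := by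
    rw [gapWeight_eq_sum_card, mul_sum, ← sum_add_distrib]
    exact sum_le_sum fun t _ => le_r_two_add_card_gaps t
  have h₄ : (∑ t ∈ range (n + 1), (t + 1)) * 2 = (n + 2) * (n + 1) := by
    have := sum_range_id_mul_two (n + 2)
    rw [sum_range_succ'] at this
    simpa using this
  linarith

theorem gapSum_three_succ_le (h0 : 0 ∈ A) (n : ℕ) :
    gapSum A 3 (n + 1) ≤ gapSum A 3 n + gapWeight A (n + 1) + #(gaps A n) ^ 3 := by
  have hterm : ∀ a ∈ gaps A n,
      r 3 A (n + 1 - a) ≤ r 3 A (n - a) + (n + 1 + 1 - a) + #(gaps A n) ^ 2 := by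
    intro a ha
    have := (mem_gaps.1 ha).1
    have := r_three_succ_le h0 (n - a)
    have := Nat.pow_le_pow_left (card_gaps_mono (A := A) (show n - a ≤ n by omega)) 2
    rw [show n + 1 - a = n - a + 1 by omega]
    omega
  have hsum := sum_le_sum hterm
  rw [sum_add_distrib, sum_add_distrib, sum_const, smul_eq_mul, ← pow_succ'] at hsum
  simp only [Nat.reduceAdd] at hsum
  rw [gapSum, gapWeight, sum_gaps_succ, sum_gaps_succ]
  split_ifs
  · simpa only [gapSum, add_zero] using hsum
  · simp only [Nat.sub_self, r_zero_right h0, gapSum]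
    omega

theorem r_four_lt_succ (h0 : 0 ∈ A) (n : ℕ)
    (h : 8 * gapWeight A (n + 1) + 2 * #(gaps A (n + 1)) ^ 3 < (n + 2) * (n + 3)) :
    r 4 A n < r 4 A (n + 1) := by
  have h₁ : r 4 A (n + 1) + _ = r 4 A n + _ + _ := r_succ_add_gapSum_succ 3 n
  have h₂ := gapSum_three_succ_le h0 n
  have h₃ := le_r_three_add_gapWeight (A := A) (n + 1)
  have h₄ := Nat.pow_le_pow_left (card_gaps_mono (A := A) n.le_succ) 3
  linarith

end

def twoPowSubOne : Set ℕ := {x | ∃ m, x = 2 ^ (m + 2) - 1}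

theorem zero_mem_compl_twoPowSubOne : 0 ∈ twoPowSubOneᶜ := by
  rintro ⟨m, hm⟩
  have := Nat.one_lt_two_pow (n := m + 2) (by omega)
  omega

theorem lt_log_sub_one_iff {j n : ℕ} : j < Nat.log 2 (n + 1) - 1 ↔ 2 ^ (j + 2) ≤ n + 1 := by
  rw [← Nat.le_log_iff_pow_le one_lt_two (by omega : n + 1 ≠ 0)]
  omega

theorem two_pow_add_two_sub_one_injective : Function.Injective fun j => 2 ^ (j + 2) - 1 := by
  intro i j h
  have := Nat.one_le_two_pow (n := i + 2)
  have := Nat.one_le_two_pow (n := j + 2)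
  simpa using Nat.pow_right_injective le_rfl (show 2 ^ (i + 2) = 2 ^ (j + 2) by simp at h; omega)

section

variable [DecidablePred (· ∈ twoPowSubOneᶜ)]

theorem gaps_compl_twoPowSubOne (n : ℕ) :
    gaps twoPowSubOneᶜ n = (range (Nat.log 2 (n + 1) - 1)).image fun j => 2 ^ (j + 2) - 1 := by
  ext a
  simp only [mem_gaps, Set.notMem_compl_iff, mem_image, mem_range, lt_log_sub_one_iff]
  constructor
  · rintro ⟨han, m, rfl⟩
    exact ⟨m, by have := Nat.one_le_two_pow (n := m + 2); omega, rfl⟩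
  · rintro ⟨m, hm, rfl⟩
    exact ⟨by omega, m, rfl⟩

theorem card_gaps_compl_twoPowSubOne (n : ℕ) :
    #(gaps twoPowSubOneᶜ n) = Nat.log 2 (n + 1) - 1 := by
  rw [gaps_compl_twoPowSubOne, card_image_of_injective _ two_pow_add_two_sub_one_injective,
    card_range]

theorem gapWeight_compl_twoPowSubOne (n : ℕ) :
    gapWeight twoPowSubOneᶜ n + 2 ^ (Nat.log 2 (n + 1) - 1 + 2) =
      (Nat.log 2 (n + 1) - 1) * (n + 2) + 4 := by
  rw [gapWeight, gaps_compl_twoPowSubOne, sum_image two_pow_add_two_sub_one_injective.injOn]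
  set K := Nat.log 2 (n + 1) - 1
  have hgeom : ∑ j ∈ range K, 2 ^ (j + 2) + 4 = 2 ^ (K + 2) := by
    induction K with
    | zero => rfl
    | succ K ih => rw [sum_range_succ, add_right_comm, ih]; ring
  have hsplit : ∑ j ∈ range K, (n + 1 - (2 ^ (j + 2) - 1)) + ∑ j ∈ range K, 2 ^ (j + 2) =
      K * (n + 2) := by
    rw [← sum_add_distrib, ← card_range K, ← smul_eq_mul, ← sum_const, card_range]
    refine sum_congr rfl fun j hj => ?_
    have := lt_log_sub_one_iff.1 (mem_range.1 hj)
    have := Nat.one_le_two_pow (n := j + 2)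
    omega
  omega

end

theorem cubic_lt_two_pow {K : ℕ} (hK : 1 ≤ K) :
    8 * K ^ 3 + 64 * K ^ 2 + 16 * K + 129 < 128 * 2 ^ K := by
  induction K, hK using Nat.le_induction with
  | base => norm_num
  | succ K hK ih =>
    rcases Nat.lt_or_ge K 3 with hK3 | hK3
    · interval_cases K <;> norm_num
    · obtain ⟨L, rfl⟩ : ∃ L, K = L + 3 := ⟨K - 3, by omega⟩
      rw [pow_succ]
      ring_nf at ih ⊢
      nlinarith [Nat.zero_le (L ^ 3), Nat.zero_le (L ^ 2)]

theorem gap_bound_compl_twoPowSubOne [DecidablePred (· ∈ twoPowSubOneᶜ)] (n : ℕ) :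
    8 * gapWeight twoPowSubOneᶜ (n + 1) + 2 * #(gaps twoPowSubOneᶜ (n + 1)) ^ 3 <
      (n + 2) * (n + 3) := by
  have hV := gapWeight_compl_twoPowSubOne (n + 1)
  rw [card_gaps_compl_twoPowSubOne]
  generalize Nat.log 2 (n + 1 + 1) - 1 = K at hV ⊢
  generalize gapWeight twoPowSubOneᶜ (n + 1) = V at hV ⊢
  rcases K.eq_zero_or_pos with rfl | hK
  · simp only [zero_add, zero_mul] at hV
    simp only [show V = 0 by omega]
    positivity
  · have := cubic_lt_two_pow hK
    rw [pow_add] at hV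
    zify at *
    -- `(2 (n + 3) - 8 K - 1) ^ 2 ≥ 0` leaves exactly `cubic_lt_two_pow`
    nlinarith [sq_nonneg (2 * (n : ℤ) + 6 - 8 * K - 1)]

theorem stmt_13 (F : Set ℕ) (hF : F = {x : ℕ | ∃ m : ℕ, x = 2 ^ (m + 2) - 1})
    (A : Set ℕ) (hA : A = Set.univ \ F) :
    1 ≤ r 4 A 0 ∧ ∀ n : ℕ, r 4 A n < r 4 A (n + 1) := by
  classical
  subst hF hA
  rw [← Set.compl_eq_univ_sdiff]
  change 1 ≤ r 4 twoPowSubOneᶜ 0 ∧ ∀ n, r 4 twoPowSubOneᶜ n < r 4 twoPowSubOneᶜ (n + 1)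
  refine ⟨(r_zero_right zero_mem_compl_twoPowSubOne 4).ge, fun n => ?_⟩
  exact r_four_lt_succ zero_mem_compl_twoPowSubOne n (gap_bound_compl_twoPowSubOne n)
end
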